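/- arXiv:math-ph/0703067 — 8 statements merged into one kernel-verified Lean document; each statement's English description precedes it below -/
import Mathlib

section
/- In a weakly nonassociative algebra A, the middle nucleus A' is a two-sided ideal of A (i.e., for b ∈ A' and a ∈ A, both a∘b and b∘a lie in A'). -/
/-- The middle nucleus of a (possibly nonassociative) algebra. -/
def middleNucleus {A : Type*} [NonUnitalNonAssocRing A] : Set A :=
  {b : A | ∀ a c : A, (a * b) * c = a * (b * c)}

/-- In a weakly nonassociative algebra, the middle nucleus is a two-sided ideal. -/
theorem middleNucleus_is_ideal
    {A : Type*} [NonUnitalNonAssocRing A]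
    (hWNA : ∀ a b c d : A, ((a * (b * c)) * d) = a * ((b * c) * d))
    (hNA : ¬ ∀ a b c : A, (a * b) * c = a * (b * c)) :
    ∀ (a b : A), b ∈ middleNucleus → a * b ∈ middleNucleus ∧ b * a ∈ middleNucleus := by
  intro a b _
  exact ⟨fun x y => hWNA x a b y, fun x y => hWNA x b a y⟩
end

section
/- In a WNA algebra A with fixed element f ∉ A', define products a ∘_1 b = a∘b and a ∘_{n+1} b = a∘(f ∘_n b) - (a∘f) ∘_n b. Then the products ∘_n depend only on the equivalence class of f modulo A': if f' = f + g with g ∈ A', then the products defined using f' coincide with those defined using f. -/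
/-- The sequence of products `∘_{n+1}` built from an element `f` of a WNA algebra:
`circ f 0 a b = a * b` (i.e. `a ∘_1 b`) and
`circ f (n+1) a b = a * (f ∘_{n+1} b) - (a * f) ∘_{n+1} b` (i.e. `a ∘_{n+2} b`). -/
def circ {A : Type*} [NonUnitalNonAssocRing A] (f : A) : ℕ → A → A → A
  | 0 => fun a b => a * b
  | n + 1 => fun a b => a * circ f n f b - circ f n (a * f) b

theorem circ_add_left {A : Type*} [NonUnitalNonAssocRing A] (f : A) :
    ∀ (n : ℕ) (x y b : A), circ f n (x + y) b = circ f n x b + circ f n y b := by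
  intro n
  induction n with
  | zero => intro x y b; simp [circ, add_mul]
  | succ n ih =>
      intro x y b
      simp only [circ, add_mul, ih]
      abel

theorem circ_nucleus {A : Type*} [NonUnitalNonAssocRing A]
    (hWNA : ∀ a b c d : A, ((a * (b * c)) * d) = a * ((b * c) * d)) (f : A) :
    ∀ (n : ℕ) (x : A), x ∈ middleNucleus → ∀ a b : A,
      circ f n (a * x) b = a * circ f n x b := by
  intro n
  induction n with
  | zero => intro x hx a b; exact hx a b
  | succ n ih =>
      intro x hx a b
      have hxf : (x * f : A) ∈ middleNucleus := by
        intro u v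
        exact hWNA u x f v
      simp only [circ]
      rw [hx a (circ f n f b), hx a f, ih (x * f) hxf a b, mul_sub]

/-- The products `∘_n` only depend on the equivalence class of `f` modulo the
middle nucleus. -/
theorem circ_depends_only_on_class
    {A : Type*} [NonUnitalNonAssocRing A]
    (hWNA : ∀ a b c d : A, ((a * (b * c)) * d) = a * ((b * c) * d))
    (hNA : ¬ ∀ a b c : A, (a * b) * c = a * (b * c))
    (f : A) (hf : f ∉ middleNucleus)
    (g : A) (hg : g ∈ middleNucleus) :
    ∀ (n : ℕ) (a b : A), circ (f + g) n a b = circ f n a b := by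
  intro n
  induction n with
  | zero => intro a b; rfl
  | succ n ih =>
      intro a b
      simp only [circ, ih, mul_add, circ_add_left]
      rw [circ_nucleus hWNA f n g hg a b]
      abel
end

section
/- In a WNA algebra with products ∘_n defined via the element f, the products are combined associative: a ∘_m (b ∘_n c) = (a ∘_m b) ∘_n c for all a,b,c in the middle nucleus A' and all m,n ≥ 1. -/
section Aux

variable {A : Type*} [NonUnitalNonAssocRing A]

lemma mul_mem_middleNucleus
    (hWNA : ∀ a b c d : A, ((a * (b * c)) * d) = a * ((b * c) * d))
    (x y : A) : x * y ∈ middleNucleus :=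
  fun a c => hWNA a x y c

lemma sub_mem_middleNucleus {z w : A}
    (hz : z ∈ middleNucleus) (hw : w ∈ middleNucleus) :
    z - w ∈ middleNucleus := by
  intro a c
  simp [mul_sub, sub_mul, hz a c, hw a c]

lemma circ_mem_middleNucleus
    (hWNA : ∀ a b c d : A, ((a * (b * c)) * d) = a * ((b * c) * d))
    (f : A) : ∀ n a b, circ f n a b ∈ middleNucleus := by
  intro n
  induction n with
  | zero => intro a b; exact mul_mem_middleNucleus hWNA a b
  | succ n ih =>
      intro a b
      exact sub_mem_middleNucleus
        (mul_mem_middleNucleus hWNA a (circ f n f b)) (ih (a * f) b)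

lemma circ_mul_left
    (hWNA : ∀ a b c d : A, ((a * (b * c)) * d) = a * ((b * c) * d))
    (f : A) : ∀ (n : ℕ) (x y b : A), y ∈ middleNucleus →
      circ f n (x * y) b = x * circ f n y b := by
  intro n
  induction n with
  | zero => intro x y b hy; exact hy x b
  | succ n ih =>
      intro x y b hy
      show (x * y) * circ f n f b - circ f n ((x * y) * f) b
          = x * (y * circ f n f b - circ f n (y * f) b)
      rw [hy x f, ih x (y * f) b (mul_mem_middleNucleus hWNA y f),
        hy x (circ f n f b), mul_sub]

lemma circ_mul_right
    (hWNA : ∀ a b c d : A, ((a * (b * c)) * d) = a * ((b * c) * d))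
    (f : A) : ∀ (n : ℕ) (a x y : A), x ∈ middleNucleus →
      circ f n a (x * y) = circ f n a x * y := by
  intro n
  induction n with
  | zero => intro a x y hx; exact (hx a y).symm
  | succ n ih =>
      intro a x y hx
      show a * circ f n f (x * y) - circ f n (a * f) (x * y)
          = (a * circ f n f x - circ f n (a * f) x) * y
      rw [ih f x y hx, ih (a * f) x y hx,
        ← circ_mem_middleNucleus hWNA f n f x a y, sub_mul]

lemma circ_sub_right (f : A) :
    ∀ (n : ℕ) (a b c : A), circ f n a (b - c) = circ f n a b - circ f n a c := by
  intro n
  induction n with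
  | zero => intro a b c; exact mul_sub a b c
  | succ n ih =>
      intro a b c
      show a * circ f n f (b - c) - circ f n (a * f) (b - c)
          = (a * circ f n f b - circ f n (a * f) b)
            - (a * circ f n f c - circ f n (a * f) c)
      rw [ih f b c, ih (a * f) b c, mul_sub]
      abel

end Aux

/-- Combined associativity of the products `∘_m` on the middle nucleus:
`a ∘_m (b ∘_n c) = (a ∘_m b) ∘_n c`. -/
theorem circ_combined_associative
    {A : Type*} [NonUnitalNonAssocRing A]
    (hWNA : ∀ a b c d : A, ((a * (b * c)) * d) = a * ((b * c) * d))
    (hNA : ¬ ∀ a b c : A, (a * b) * c = a * (b * c))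
    (f : A) (hf : f ∉ middleNucleus) :
    ∀ (m n : ℕ) (a b c : A), a ∈ middleNucleus → b ∈ middleNucleus →
      c ∈ middleNucleus →
      circ f m a (circ f n b c) = circ f n (circ f m a b) c := by
  intro m n
  induction n generalizing m with
  | zero =>
      intro a b c _ hb _
      exact circ_mul_right hWNA f m a b c hb
  | succ n ih =>
      intro a b c ha hb hc
      show circ f m a (b * circ f n f c - circ f n (b * f) c)
          = circ f m a b * circ f n f c - circ f n (circ f m a b * f) c
      rw [circ_sub_right f m a,
        circ_mul_right hWNA f m a b (circ f n f c) hb,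
        ih m a (b * f) c ha (mul_mem_middleNucleus hWNA b f) hc,
        circ_mul_right hWNA f m a b f hb]
end

section
/- In a WNA algebra with products ∘_n defined via f, the relation a ∘_{m+n} b = a ∘_m (f ∘_n b) - (a ∘_m f) ∘_n b holds for all a,b ∈ A and all m,n ≥ 1. -/
lemma circ_sub_left {A : Type*} [NonUnitalNonAssocRing A] (f : A) :
    ∀ (n : ℕ) (x y b : A), circ f n (x - y) b = circ f n x b - circ f n y b := by
  intro n
  induction n with
  | zero => intro x y b; simp [circ, sub_mul]
  | succ n ih =>
      intro x y b
      simp only [circ, sub_mul, ih]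
      abel

lemma mem_mid_sub {A : Type*} [NonUnitalNonAssocRing A] {x y : A}
    (hx : x ∈ middleNucleus) (hy : y ∈ middleNucleus) : x - y ∈ middleNucleus := by
  intro a c
  simp [mul_sub, sub_mul, hx a c, hy a c]

lemma circ_mem_mid {A : Type*} [NonUnitalNonAssocRing A]
    (hWNA : ∀ a b c d : A, ((a * (b * c)) * d) = a * ((b * c) * d)) (f : A) :
    ∀ (n : ℕ) (a b : A), circ f n a b ∈ middleNucleus := by
  intro n
  induction n with
  | zero => intro a b x c; exact hWNA x a b c
  | succ n ih =>
      intro a b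
      exact mem_mid_sub (fun x c => hWNA x a (circ f n f b) c) (ih (a * f) b)

lemma circ_mid_pull {A : Type*} [NonUnitalNonAssocRing A]
    (hWNA : ∀ a b c d : A, ((a * (b * c)) * d) = a * ((b * c) * d)) (f : A) :
    ∀ (n : ℕ) (x : A), x ∈ middleNucleus →
      ∀ a b : A, a * circ f n x b = circ f n (a * x) b := by
  intro n
  induction n with
  | zero => intro x hx a b; exact (hx a b).symm
  | succ n ih =>
      intro x hx a b
      have hxf : x * f ∈ middleNucleus := fun u v => hWNA u x f v
      show a * (x * circ f n f b - circ f n (x * f) b) = _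
      rw [mul_sub, ih (x * f) hxf a b, ← hx a (circ f n f b), ← hx a f]
      rfl

/-- The relation `a ∘_{m+n} b = a ∘_m (f ∘_n b) - (a ∘_m f) ∘_n b` for all
`m, n ≥ 1` (here `circ f k` is the product `∘_{k+1}`). -/
theorem circ_add_index
    {A : Type*} [NonUnitalNonAssocRing A]
    (hWNA : ∀ a b c d : A, ((a * (b * c)) * d) = a * ((b * c) * d))
    (hNA : ¬ ∀ a b c : A, (a * b) * c = a * (b * c))
    (f : A) (hf : f ∉ middleNucleus) :
    ∀ (m n : ℕ) (a b : A),
      circ f (m + n + 1) a b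
        = circ f m a (circ f n f b) - circ f n (circ f m a f) b := by
  intro m
  induction m with
  | zero => intro n a b; simp [circ]
  | succ m ih =>
      intro n a b
      have h : m + 1 + n + 1 = (m + n + 1) + 1 := by omega
      rw [h]
      show a * circ f (m + n + 1) f b - circ f (m + n + 1) (a * f) b = _
      rw [ih n f b, ih n (a * f) b, mul_sub,
        circ_mid_pull hWNA f n (circ f m f f) (circ_mem_mid hWNA f m f f) a b]
      show _ = (a * circ f m f (circ f n f b) - circ f m (a * f) (circ f n f b))
          - circ f n (a * circ f m f f - circ f m (a * f) f) b
      rw [circ_sub_left, ← circ_mid_pull hWNA f n (circ f m f f) (circ_mem_mid hWNA f m f f) a b]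
      abel
end

section
/- In a WNA algebra with products ∘_n defined via f, the identity a ∘_n f = (-1)^{n+1} R_f^n(a) - \sum_{k=1}^{n-1} (-1)^k (R_f^{k-1}(a)) ∘ p_{n-k} holds, where p_n := f ∘_n f and R_f denotes right multiplication by f. -/
/-- `a ∘_n f = (-1)^{n+1} R_f^n a - ∑_{k=1}^{n-1} (-1)^k (R_f^{k-1} a) ∘ p_{n-k}`,
where `p_j = f ∘_j f` and `R_f` is right multiplication by `f`. -/
theorem circ_f_right_formula
    {A : Type*} [NonUnitalNonAssocRing A]
    (hWNA : ∀ a b c d : A, ((a * (b * c)) * d) = a * ((b * c) * d))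
    (hNA : ¬ ∀ a b c : A, (a * b) * c = a * (b * c))
    (f : A) (hf : f ∉ middleNucleus)
    (p : ℕ → A) (hp : ∀ k, 1 ≤ k → p k = circ f (k - 1) f f)
    (Rf : A → A) (hRf : ∀ a, Rf a = a * f) :
    ∀ (n : ℕ), 1 ≤ n → ∀ a : A,
      circ f (n - 1) a f
        = ((-1 : ℤ) ^ (n + 1)) • Rf^[n] a
          - ∑ k ∈ Finset.Icc 1 (n - 1), ((-1 : ℤ) ^ k) • (Rf^[k - 1] a * p (n - k)) := by
  have key : ∀ (m : ℕ) (a : A),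
      circ f m a f
        = ((-1 : ℤ) ^ (m + 2)) • Rf^[m + 1] a
          - ∑ k ∈ Finset.Icc 1 m, ((-1 : ℤ) ^ k) • (Rf^[k - 1] a * p (m + 1 - k)) := by
    intro m
    induction m with
    | zero =>
      intro a
      simp [circ, hRf]
    | succ m ih =>
      intro a
      have h1 : circ f (m + 1) a f = a * p (m + 1) - circ f m (Rf a) f := by
        rw [hp (m + 1) (by omega), hRf]
        simp [circ]
      rw [h1, ih (Rf a)]
      have hit : Rf^[m + 1] (Rf a) = Rf^[m + 2] a :=
        (Function.iterate_succ_apply Rf (m + 1) a).symm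
      rw [hit]
      -- rewrite sums over range
      have hsum1 : ∑ k ∈ Finset.Icc 1 m, ((-1 : ℤ) ^ k) • (Rf^[k - 1] (Rf a) * p (m + 1 - k))
          = ∑ i ∈ Finset.range m, ((-1 : ℤ) ^ (1 + i)) • (Rf^[i + 1] a * p (m - i)) := by
        rw [← Finset.Ico_add_one_right_eq_Icc, Finset.sum_Ico_eq_sum_range]
        apply Finset.sum_congr (by norm_num)
        intro i hi
        have hji : Rf^[1 + i - 1] (Rf a) = Rf^[i + 1] a := by
          simp [Function.iterate_succ_apply]
        have h6 : m + 1 - (1 + i) = m - i := by omega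
        rw [hji, h6]
      have hsum2 : ∑ k ∈ Finset.Icc 1 (m + 1), ((-1 : ℤ) ^ k) • (Rf^[k - 1] a * p (m + 1 + 1 - k))
          = (∑ i ∈ Finset.range m, (-(((-1 : ℤ) ^ (1 + i)) • (Rf^[i + 1] a * p (m - i)))))
              + (-(a * p (m + 1))) := by
        rw [← Finset.Ico_add_one_right_eq_Icc, Finset.sum_Ico_eq_sum_range]
        have hr : m + 1 + 1 - 1 = m + 1 := by omega
        rw [hr, Finset.sum_range_succ']
        congr 1
        · apply Finset.sum_congr rfl
          intro i _
          have h2 : 1 + (i + 1) - 1 = i + 1 := by omega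
          have h3 : m + 1 + 1 - (1 + (i + 1)) = m - i := by omega
          rw [h2, h3]
          have h4 : ((-1 : ℤ) ^ (1 + (i + 1))) = -((-1 : ℤ) ^ (1 + i)) := by
            rw [show 1 + (i + 1) = (1 + i) + 1 by omega, pow_succ]
            ring
          rw [h4, neg_smul]
        · simp
      rw [hsum1, hsum2, Finset.sum_neg_distrib]
      have h5 : ((-1 : ℤ) ^ (m + 1 + 2)) = -((-1 : ℤ) ^ (m + 2)) := by
        rw [show m + 1 + 2 = (m + 2) + 1 by omega, pow_succ]; ring
      rw [h5, neg_smul]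
      abel
  intro n hn a
  obtain ⟨m, rfl⟩ : ∃ m, n = m + 1 := ⟨n - 1, by omega⟩
  have h0 : m + 1 - 1 = m := by omega
  rw [h0, key m a]
end

section
/- Let φ satisfy the three Riccati-type equations φ_x = S + Lφ - φR - φQφ, 0 = S_2 + L_2 φ - φ R_2 - φ Q_2 φ, and φ_θ = -(1/2) φ_x (R_2 + Q_2 φ), where L_2 = L^2 + SQ, Q_2 = QL + RQ, R_2 = R^2 + QS, S_2 = LS + SR. Then φ satisfies the potential KdV equation φ_θ = -(1/8) φ_{xxx} - (3/4) φ_x Q φ_x, where φ_{xx} and φ_{xxx} are computed by formally differentiating the Riccati equation for φ_x using the Leibniz rule (with L, Q, R, S constant). -/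
/-- The potential KdV equation arises as a deformation flow: given the Riccati
equation for `φ_x`, the algebraic Riccati equation from `φ_y = 0`, the claim is
`-(1/2) φ_x (R₂ + Q₂ φ) = -(1/8) φ_{xxx} - (3/4) φ_x Q φ_x`. -/
theorem deformation_flow_is_potential_KdV
    {α : Type*} [Ring α] [Algebra ℚ α] {N M : ℕ}
    (L : Matrix (Fin M) (Fin M) α) (Q : Matrix (Fin N) (Fin M) α)
    (R : Matrix (Fin N) (Fin N) α) (S : Matrix (Fin M) (Fin N) α)
    (φ φx φxx φxxx : Matrix (Fin M) (Fin N) α)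
    (L2 : Matrix (Fin M) (Fin M) α) (hL2 : L2 = L ^ 2 + S * Q)
    (Q2 : Matrix (Fin N) (Fin M) α) (hQ2 : Q2 = Q * L + R * Q)
    (R2 : Matrix (Fin N) (Fin N) α) (hR2 : R2 = R ^ 2 + Q * S)
    (S2 : Matrix (Fin M) (Fin N) α) (hS2 : S2 = L * S + S * R)
    (hφx : φx = S + L * φ - φ * R - φ * Q * φ)
    (hφxx : φxx = L * φx - φx * R - φx * Q * φ - φ * Q * φx)
    (hφxxx : φxxx = L * φxx - φxx * R - φxx * Q * φ - (2 : ℚ) • (φx * Q * φx)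
      - φ * Q * φxx)
    (hRic : S2 + L2 * φ - φ * R2 - φ * Q2 * φ = 0) :
    -((1/2 : ℚ) • (φx * (R2 + Q2 * φ)))
      = -((1/8 : ℚ) • φxxx) - (3/4 : ℚ) • (φx * Q * φx) := by
  subst hL2 hQ2 hR2 hS2 hφx hφxx hφxxx
  rw [← sub_eq_zero]
  calc _ = (1/8 : ℚ) • (L * (L * S + S * R + (L ^ 2 + S * Q) * φ - φ * (R ^ 2 + Q * S) - φ * (Q * L + R * Q) * φ)
            - (L * S + S * R + (L ^ 2 + S * Q) * φ - φ * (R ^ 2 + Q * S) - φ * (Q * L + R * Q) * φ) * R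
            - (L * S + S * R + (L ^ 2 + S * Q) * φ - φ * (R ^ 2 + Q * S) - φ * (Q * L + R * Q) * φ) * Q * φ
            - φ * Q * (L * S + S * R + (L ^ 2 + S * Q) * φ - φ * (R ^ 2 + Q * S) - φ * (Q * L + R * Q) * φ))
          - (1/4 : ℚ) • ((L * S + S * R + (L ^ 2 + S * Q) * φ - φ * (R ^ 2 + Q * S) - φ * (Q * L + R * Q) * φ) * (R + Q * φ)) := by
        simp only [pow_two, Matrix.mul_add, Matrix.add_mul, Matrix.mul_sub, Matrix.sub_mul, Matrix.smul_mul,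
          Matrix.mul_smul, Matrix.mul_assoc, smul_add, smul_sub, smul_smul]
        module
    _ = 0 := by rw [hRic]; simp
end

section
/- Given commuting derivations ∂_1, ∂_2, ... on an algebra, the family D_k := (-1)^k p_k(-∂̃), where p_k is the k-th elementary Schur polynomial and ∂̃ = (∂_1, ∂_2/2, ∂_3/3, ...), forms a Hasse-Schmidt derivation: D_k(ab) = \sum_{j=0}^k D_j(a) D_{k-j}(b) for all k ≥ 0 (with D_0 = id). -/
/-- The `n`-th elementary Schur polynomial evaluated at `x_1, x_2, …`:
the coefficient of `λ^n` in `∏_{k=1}^{n} exp(x_k λ^k)`, matching the generating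
function `∑_{n≥0} p_n(x) λ^n = exp(∑_{k≥1} x_k λ^k)` (when the `x_k` commute). -/
noncomputable def elemSchur {A : Type*} [Ring A] [Algebra ℚ A] (x : ℕ → A) (n : ℕ) : A :=
  (((List.range n).map (fun k => ∑ j ∈ Finset.range (n + 1),
      Polynomial.C ((j.factorial : ℚ)⁻¹ • x (k + 1) ^ j)
        * Polynomial.X ^ ((k + 1) * j))).prod).coeff n

/-!
Put `D(λ) = ∑ₖ D_k λ^k` with coefficients in operators on `A`. The Hasse–Schmidt identity
says that `D(λ)(ab) = D(λ)a · D(λ)b` coefficientwise, and it is stable under products of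
operator polynomials: both sides of the identity for `PQ` expand into the same sum over
`r + s + p + q = k` of `P_r Q_p a · P_s Q_q b`. For a derivation `u` the divided powers
`u^j / j!` obey Leibniz's rule, so `exp(u λ^m)` is Hasse–Schmidt, and so is the product
`∏_m exp(x_m λ^m)`, whose `λ^k`-coefficient is `p_k(x)`; the substitution `λ ↦ -λ` produces
the sign `(-1)^k`. The truncations in `elemSchur` (of each exponential, and of the product at
degree `n`) leave all coefficients of degree `≤ n` unchanged, so the identity in degrees `≤ n`
can be read off the single truncated product of level `n`.
-/

open Finset Polynomial
open scoped Nat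

section Derivation

variable {R A : Type*} [CommSemiring R] [NonUnitalNonAssocSemiring A] [Module R A]

def IsDerivation (u : Module.End R A) : Prop :=
  ∀ a b, u (a * b) = u a * b + a * u b

theorem IsDerivation.smul [IsScalarTower R A A] [SMulCommClass R A A] {u : Module.End R A}
    (hu : IsDerivation u) (c : R) : IsDerivation (c • u) := fun a b => by
  simp only [LinearMap.smul_apply, hu a b, smul_add, smul_mul_assoc, mul_smul_comm]

theorem IsDerivation.pow_apply_mul {u : Module.End R A} (hu : IsDerivation u) (n : ℕ) (a b : A) :
    (u ^ n) (a * b) = ∑ x ∈ antidiagonal n, n.choose x.1 • ((u ^ x.1) a * (u ^ x.2) b) := by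
  induction n with
  | zero => simp
  | succ n ih =>
    rw [sum_antidiagonal_choose_succ_nsmul (fun i j => (u ^ i) a * (u ^ j) b), pow_succ',
      Module.End.mul_apply, ih, map_sum, ← sum_add_distrib]
    refine sum_congr rfl fun x hx => ?_
    rw [map_nsmul, hu, Nat.choose_symm_of_eq_add (mem_antidiagonal.1 hx).symm, ← smul_add,
      add_comm, pow_succ', pow_succ', Module.End.mul_apply, Module.End.mul_apply]

end Derivation

theorem IsDerivation.neg {R A : Type*} [CommSemiring R] [NonUnitalNonAssocRing A] [Module R A]
    {u : Module.End R A} (hu : IsDerivation u) : IsDerivation (-u) := fun a b => by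
  simp only [LinearMap.neg_apply, hu a b, neg_add, neg_mul, mul_neg]

section HasseSchmidt

variable {R A : Type*} [CommSemiring R] [NonUnitalNonAssocSemiring A] [Module R A]

def IsHasseSchmidtUpTo (N : ℕ) (D : ℕ → Module.End R A) : Prop :=
  ∀ k ≤ N, ∀ a b : A, D k (a * b) = ∑ x ∈ antidiagonal k, D x.1 a * D x.2 b

def IsHasseSchmidt (D : ℕ → Module.End R A) : Prop :=
  ∀ N, IsHasseSchmidtUpTo N D

theorem IsHasseSchmidtUpTo.congr {N : ℕ} {D E : ℕ → Module.End R A}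
    (hD : IsHasseSchmidtUpTo N D) (hDE : ∀ k ≤ N, D k = E k) : IsHasseSchmidtUpTo N E := by
  intro k hk a b
  rw [← hDE k hk, hD k hk]
  refine sum_congr rfl fun x hx => ?_
  have hx := mem_antidiagonal.1 hx
  rw [hDE x.1 (by omega), hDE x.2 (by omega)]

theorem IsHasseSchmidt.pow_smul [IsScalarTower R A A] [SMulCommClass R A A] {D : ℕ → Module.End R A}
    (hD : IsHasseSchmidt D) (c : R) : IsHasseSchmidt fun k => c ^ k • D k := by
  intro N k hk a b
  rw [LinearMap.smul_apply, hD N k hk, smul_sum]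
  refine sum_congr rfl fun x hx => ?_
  rw [LinearMap.smul_apply, LinearMap.smul_apply, smul_mul_smul_comm, ← pow_add,
    mem_antidiagonal.1 hx]

theorem isHasseSchmidt_coeff_one : IsHasseSchmidt (R := R) (A := A) (coeff 1) := by
  intro N k _ a b
  rcases k with _ | k
  · simp
  · rw [sum_eq_zero]
    · simp [coeff_one]
    · intro x hx
      rcases x with ⟨_ | i, j⟩ <;> simp_all [coeff_one]

theorem IsHasseSchmidtUpTo.coeff_mul {N : ℕ} {P Q : (Module.End R A)[X]}
    (hP : IsHasseSchmidtUpTo N P.coeff) (hQ : IsHasseSchmidtUpTo N Q.coeff) :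
    IsHasseSchmidtUpTo N (P * Q).coeff := by
  intro k hk a b
  have hexpand : ∀ x ∈ antidiagonal k, P.coeff x.1 (Q.coeff x.2 (a * b)) =
      ∑ y ∈ antidiagonal x.2, ∑ z ∈ antidiagonal x.1,
        P.coeff z.1 (Q.coeff y.1 a) * P.coeff z.2 (Q.coeff y.2 b) := by
    intro x hx
    have hx := mem_antidiagonal.1 hx
    rw [hQ x.2 (by omega), map_sum]
    exact sum_congr rfl fun y _ => hP x.1 (by omega) _ _
  simp only [Polynomial.coeff_mul, LinearMap.sum_apply, Module.End.mul_apply,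
    sum_congr rfl hexpand, sum_mul_sum, sum_sigma']
  apply sum_nbij' (fun ⟨⟨_, _⟩, ⟨⟨p, q⟩, ⟨r, s⟩⟩⟩ => ⟨(r + p, s + q), ⟨(r, p), (s, q)⟩⟩)
    (fun ⟨⟨_, _⟩, ⟨⟨r, p⟩, ⟨s, q⟩⟩⟩ => ⟨(r + s, p + q), ⟨(p, q), (r, s)⟩⟩) <;>
    aesop (add simp [HasAntidiagonal.mem_antidiagonal]) (add safe (by omega))

theorem IsHasseSchmidtUpTo.coeff_list_prod {N : ℕ} {L : List (Module.End R A)[X]}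
    (hL : ∀ P ∈ L, IsHasseSchmidtUpTo N P.coeff) : IsHasseSchmidtUpTo N L.prod.coeff :=
  L.prod_induction (fun P => IsHasseSchmidtUpTo N P.coeff) (fun _ _ => coeff_mul)
    (isHasseSchmidt_coeff_one N) hL

def expandFamily {M : Type*} [Zero M] (m : ℕ) (D : ℕ → M) (i : ℕ) : M :=
  if m ∣ i then D (i / m) else 0

theorem isHasseSchmidt_expandFamily {m : ℕ} (hm : 0 < m) {D : ℕ → Module.End R A}
    (hD : IsHasseSchmidt D) : IsHasseSchmidt (expandFamily m D) := by
  intro N k _ a b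
  have hvanish : ∀ x : ℕ × ℕ, ¬ (m ∣ x.1 ∧ m ∣ x.2) →
      expandFamily m D x.1 a * expandFamily m D x.2 b = 0 := by
    rintro ⟨p, q⟩ h
    by_cases hp : m ∣ p <;> simp_all [expandFamily]
  by_cases hk : m ∣ k
  · obtain ⟨J, rfl⟩ := hk
    rw [expandFamily, if_pos (dvd_mul_right m J), Nat.mul_div_cancel_left J hm,
      hD J J le_rfl a b]
    refine sum_of_injOn (fun y => (m * y.1, m * y.2)) ?_ ?_ ?_ ?_
    · rintro ⟨i, j⟩ - ⟨i', j'⟩ - h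
      simp_all [Nat.mul_left_cancel_iff hm]
    · rintro ⟨i, j⟩ h
      simp_all [← mul_add]
    · rintro ⟨p, q⟩ hpq hnot
      refine hvanish (p, q) ?_
      rintro ⟨⟨i, rfl⟩, ⟨j, rfl⟩⟩
      refine hnot ⟨(i, j), ?_, rfl⟩
      simp_all [← mul_add, Nat.mul_left_cancel_iff hm]
    · intro y _
      simp [expandFamily, hm]
  · rw [expandFamily, if_neg hk, LinearMap.zero_apply, eq_comm]
    refine sum_eq_zero fun x hx => hvanish x fun ⟨h1, h2⟩ => hk ?_
    rw [← mem_antidiagonal.1 hx]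
    exact dvd_add h1 h2

end HasseSchmidt

theorem IsDerivation.isHasseSchmidt_inv_factorial_smul_pow {K A : Type*} [Field K]
    [CharZero K] [NonUnitalNonAssocSemiring A] [Module K A] [IsScalarTower K A A]
    [SMulCommClass K A A] {u : Module.End K A} (hu : IsDerivation u) :
    IsHasseSchmidt fun j => (j ! : K)⁻¹ • u ^ j := by
  intro N k _ a b
  rw [LinearMap.smul_apply, hu.pow_apply_mul, smul_sum]
  refine sum_congr rfl fun x hx => ?_
  obtain rfl := mem_antidiagonal.1 hx
  rw [LinearMap.smul_apply, LinearMap.smul_apply, smul_mul_smul_comm, ← Nat.cast_smul_eq_nsmul K,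
    smul_smul, Nat.cast_add_choose, div_eq_mul_inv,
    inv_mul_cancel_left₀ (Nat.cast_ne_zero.2 (Nat.factorial_ne_zero _)), mul_inv]

section TruncatedExponential

variable (K : Type*) {S : Type*} [Field K] [Semiring S] [Algebra K S]

noncomputable def truncExp (m N : ℕ) (u : S) : S[X] :=
  ∑ j ∈ range (N + 1), C ((j ! : K)⁻¹ • u ^ j) * X ^ (m * j)

variable {K}

theorem coeff_truncExp {m N i : ℕ} (hm : 0 < m) (hi : i ≤ N) (u : S) :
    (truncExp K m N u).coeff i = expandFamily m (fun j => (j ! : K)⁻¹ • u ^ j) i := by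
  simp only [truncExp, finsetSum_coeff, coeff_C_mul_X_pow, expandFamily]
  split_ifs with h
  · obtain ⟨J, rfl⟩ := h
    have hJ : J < N + 1 := Nat.lt_succ_of_le ((Nat.le_mul_of_pos_left J hm).trans hi)
    simp [Nat.mul_left_cancel_iff hm, hm, hJ]
  · exact sum_eq_zero fun j _ => if_neg fun hj => h ⟨j, hj⟩

end TruncatedExponential

section CongruenceModXPow

variable {S : Type*} [Ring S] {n : ℕ}

theorem X_pow_dvd_mul_sub_mul {P P' Q Q' : S[X]} (hP : X ^ n ∣ P - P') (hQ : X ^ n ∣ Q - Q') :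
    X ^ n ∣ P * Q - P' * Q' := by
  obtain ⟨R, hR⟩ := hQ
  have h : P * Q - P' * Q' = (P - P') * Q + X ^ n * (P' * R) := by
    rw [← mul_assoc, (commute_X_pow P' n).eq, mul_assoc, ← hR]
    noncomm_ring
  rw [h]
  exact dvd_add (dvd_mul_of_dvd_left hP Q) (dvd_mul_right _ _)

theorem X_pow_dvd_list_prod_map_sub {ι : Type*} {f g : ι → S[X]} {l : List ι}
    (h : ∀ i ∈ l, X ^ n ∣ f i - g i) : X ^ n ∣ (l.map f).prod - (l.map g).prod := by
  induction l with
  | nil => simp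
  | cons i l ih =>
    simp only [List.map_cons, List.prod_cons]
    exact X_pow_dvd_mul_sub_mul (h i (by simp)) (ih fun j hj => h j (by simp [hj]))

end CongruenceModXPow

section SchurGenerating

variable (K : Type*) {S : Type*} [Field K] [Ring S] [Algebra K S]

noncomputable def schurGen (x : ℕ → S) (n : ℕ) : S[X] :=
  ((List.range n).map fun k => truncExp K (k + 1) n (x (k + 1))).prod

variable {K}

theorem X_pow_dvd_truncExp_sub {m n N : ℕ} (hm : 0 < m) (hnN : n ≤ N) (u : S) :
    X ^ (n + 1) ∣ truncExp K m N u - truncExp K m n u :=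
  X_pow_dvd_iff.2 fun d hd => by
    rw [coeff_sub, coeff_truncExp hm (by omega), coeff_truncExp hm (by omega), sub_self]

theorem X_pow_dvd_truncExp_sub_one {m n : ℕ} (hnm : n < m) (u : S) :
    X ^ (n + 1) ∣ truncExp K m n u - 1 :=
  X_pow_dvd_iff.2 fun d hd => by
    rw [coeff_sub, coeff_truncExp (by omega) (by omega), coeff_one, expandFamily]
    rcases d with _ | d
    · simp
    · rw [if_neg (Nat.not_dvd_of_pos_of_lt d.succ_pos (by omega)), if_neg d.succ_ne_zero,
        sub_zero]

theorem X_pow_dvd_schurGen_sub (x : ℕ → S) {n N : ℕ} (hnN : n ≤ N) :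
    X ^ (n + 1) ∣ schurGen K x N - schurGen K x n := by
  set tail := ((List.range (N - n)).map fun k => truncExp K (n + k + 1) n (x (n + k + 1))).prod
  have hsplit : ((List.range N).map fun k => truncExp K (k + 1) n (x (k + 1))).prod =
      schurGen K x n * tail := by
    rw [← Nat.add_sub_cancel' hnN, List.range_add, List.map_append, List.prod_append,
      List.map_map]
    rfl
  have htail : X ^ (n + 1) ∣ tail - 1 := by
    simpa using X_pow_dvd_list_prod_map_sub (g := fun _ => 1) fun k _ =>
      X_pow_dvd_truncExp_sub_one (K := K) (by omega) (x (n + k + 1))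
  have hN : X ^ (n + 1) ∣ schurGen K x N - schurGen K x n * tail := by
    rw [← hsplit]
    exact X_pow_dvd_list_prod_map_sub fun k _ => X_pow_dvd_truncExp_sub k.succ_pos hnN _
  have hn : X ^ (n + 1) ∣ schurGen K x n * tail - schurGen K x n := by
    simpa using X_pow_dvd_mul_sub_mul (by simp) htail
  simpa using dvd_add hN hn

theorem coeff_schurGen_of_le (x : ℕ → S) {j n : ℕ} (hjn : j ≤ n) :
    (schurGen K x n).coeff j = (schurGen K x j).coeff j :=
  sub_eq_zero.1 <| by
    rw [← coeff_sub]
    exact X_pow_dvd_iff.1 (X_pow_dvd_schurGen_sub x hjn) j j.lt_succ_self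

end SchurGenerating

section OperatorPolynomials

variable {K A : Type*} [Field K] [CharZero K] [NonUnitalNonAssocRing A] [Module K A]
  [IsScalarTower K A A] [SMulCommClass K A A]

theorem isHasseSchmidtUpTo_coeff_truncExp {m : ℕ} (hm : 0 < m) (N : ℕ) {u : Module.End K A}
    (hu : IsDerivation u) :
    IsHasseSchmidtUpTo N (truncExp K m N u).coeff :=
  (isHasseSchmidt_expandFamily hm hu.isHasseSchmidt_inv_factorial_smul_pow N).congr
    fun _ hi => (coeff_truncExp hm hi u).symm

theorem isHasseSchmidtUpTo_coeff_schurGen {x : ℕ → Module.End K A}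
    (hx : ∀ m, IsDerivation (x m)) (n : ℕ) :
    IsHasseSchmidtUpTo n (schurGen K x n).coeff :=
  IsHasseSchmidtUpTo.coeff_list_prod fun _ hP => by
    obtain ⟨k, -, rfl⟩ := List.mem_map.1 hP
    exact isHasseSchmidtUpTo_coeff_truncExp k.succ_pos n (hx (k + 1))

end OperatorPolynomials

theorem elemSchur_eq_coeff_schurGen {S : Type*} [Ring S] [Algebra ℚ S] (x : ℕ → S) (n : ℕ) :
    elemSchur x n = (schurGen ℚ x n).coeff n :=
  rfl

theorem isHasseSchmidt_elemSchur {A : Type*} [Ring A] [Algebra ℚ A] {x : ℕ → Module.End ℚ A}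
    (hx : ∀ m, IsDerivation (x m)) : IsHasseSchmidt (elemSchur x) := fun n =>
  (isHasseSchmidtUpTo_coeff_schurGen hx n).congr fun k hk =>
    (coeff_schurGen_of_le x hk).trans (elemSchur_eq_coeff_schurGen x k).symm

theorem schur_of_derivations_is_HasseSchmidt_general
    {A : Type*} [Ring A] [Algebra ℚ A]
    (del : ℕ → Module.End ℚ A)
    (hder : ∀ (m : ℕ) (a b : A), del m (a * b) = del m a * b + a * del m b)
    (D : ℕ → Module.End ℚ A)
    (hD : ∀ k, D k = ((-1 : ℚ) ^ k) •
      elemSchur (fun m => -((m : ℚ)⁻¹ • del m)) k) :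
    D 0 = 1 ∧
    ∀ (k : ℕ) (a b : A), D k (a * b) = ∑ j ∈ Finset.range (k + 1), D j a * D (k - j) b := by
  have hx (m : ℕ) : IsDerivation (-((m : ℚ)⁻¹ • del m)) :=
    (IsDerivation.smul (hder m) _).neg
  have hHS := (isHasseSchmidt_elemSchur hx).pow_smul (-1)
  obtain rfl : D = _ := funext hD
  refine ⟨by simp [elemSchur], fun k a b => ?_⟩
  rw [hHS k k le_rfl a b, Nat.sum_antidiagonal_eq_sum_range_succ_mk]

/-- Given commuting derivations `∂_1, ∂_2, …` of an algebra, the operators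
`D_k := (-1)^k p_k(-∂_1, -∂_2/2, -∂_3/3, …)` form a Hasse-Schmidt derivation:
`D_0 = id` and `D_k(ab) = ∑_{j=0}^k D_j(a) D_{k-j}(b)`. -/
theorem schur_of_derivations_is_HasseSchmidt
    {A : Type*} [Ring A] [Algebra ℚ A]
    (del : ℕ → Module.End ℚ A)
    (hder : ∀ (m : ℕ) (a b : A), del m (a * b) = del m a * b + a * del m b)
    (hcomm : ∀ m l : ℕ, del m * del l = del l * del m)
    (D : ℕ → Module.End ℚ A)
    (hD : ∀ k, D k = ((-1 : ℚ) ^ k) •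
      elemSchur (fun m => -((m : ℚ)⁻¹ • del m)) k) :
    D 0 = 1 ∧
    ∀ (k : ℕ) (a b : A), D k (a * b) = ∑ j ∈ Finset.range (k + 1), D j a * D (k - j) b :=
  schur_of_derivations_is_HasseSchmidt_general del hder D hD
end

section
/- Let φ_0 be a constant M×N matrix and define φ(t) := e^{ξ(L)} φ_0 ( e^{ξ(R)}(I_N + K φ_0) - K e^{ξ(L)} φ_0 )^{-1} with ξ(A) = \sum_{n=1}^{N_0} t_n A^n (finitely many times t_1,...,t_{N_0}), where Q = RK - KL. Then, wherever the inverse exists, φ satisfies the matrix Riccati equations ∂_{t_n} φ = L^n φ - φ R^n - φ (R^n K - K L^n) φ for n = 1, ..., N_0. -/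
/-!
Put `F = e^{ξ(L)}`, `E = e^{ξ(R)}` and `G = E (1 + K φ₀) - K F φ₀`. Since the powers of `L`
commute, `F` splits off the factor `e^{t_n Lⁿ}`, so along the time `t_n` it solves `∂F = Lⁿ F`;
likewise `∂E = Rⁿ E`, hence
`∂G = Rⁿ G + (Rⁿ K - K Lⁿ) F φ₀`. Differentiating `φ = F φ₀ G⁻¹` with `∂(G⁻¹) = -G⁻¹ (∂G) G⁻¹`
then gives `∂φ = Lⁿ φ - φ Rⁿ - φ (Rⁿ K - K Lⁿ) φ`.
-/

open Matrix

-- `HasDerivAt` only sees the topology of a matrix space; this norm is just a convenient one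
-- making square matrices a Banach algebra.
attribute [local instance] Matrix.linftyOpNormedAddCommGroup Matrix.linftyOpNormedSpace
  Matrix.linftyOpNormedRing Matrix.linftyOpNormedAlgebra

section ExpAlongLine

variable {𝕂 𝔸 : Type*} [RCLike 𝕂] [NormedRing 𝔸] [NormedAlgebra 𝕂 𝔸] [NormedAlgebra ℚ 𝔸]
  [CompleteSpace 𝔸]

theorem hasDerivAt_exp_add_smul {C A : 𝔸} (h : Commute C A) (x : 𝕂) :
    HasDerivAt (fun s : 𝕂 => NormedSpace.exp (C + s • A))
      (A * NormedSpace.exp (C + x • A)) x := by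
  have hsplit (s : 𝕂) : NormedSpace.exp (C + s • A)
      = NormedSpace.exp C * NormedSpace.exp (s • A) :=
    NormedSpace.exp_add_of_commute (h.smul_right s)
  have hA : A * NormedSpace.exp C = NormedSpace.exp C * A := h.symm.exp_right.eq
  simp only [hsplit, ← mul_assoc, hA]
  simpa only [mul_assoc] using (hasDerivAt_exp_smul_const' (𝕂 := 𝕂) A x).const_mul _

theorem hasDerivAt_exp_sum_update {ι : Type*} [Fintype ι] [DecidableEq ι]
    (f : ι → 𝔸) (t : ι → 𝕂) (n : ι) (hf : ∀ m, Commute (f m) (f n)) (x : 𝕂) :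
    HasDerivAt (fun s => NormedSpace.exp (∑ m, Function.update t n s m • f m))
      (f n * NormedSpace.exp (∑ m, Function.update t n x m • f m)) x := by
  set C := ∑ m ∈ Finset.univ \ {n}, t m • f m
  have hsum (s : 𝕂) : ∑ m, Function.update t n s m • f m = C + s • f n := by
    have hupd : (fun m => Function.update t n s m • f m)
        = Function.update (fun m => t m • f m) n (s • f n) := by
      ext1 m
      rcases eq_or_ne m n with rfl | hm <;> simp [*]
    rw [hupd, Finset.sum_update_of_mem (Finset.mem_univ n), add_comm]
  have hC : Commute C (f n) := Commute.sum_left _ _ _ fun m _ => (hf m).smul_left (t m)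
  simpa only [hsum] using hasDerivAt_exp_add_smul hC x

end ExpAlongLine

theorem HasDerivAt.ringInverse {𝕜 R : Type*} [NontriviallyNormedField 𝕜] [NormedRing R]
    [HasSummableGeomSeries R] [NormedAlgebra 𝕜 R] {g : 𝕜 → R} {g' : R} {x : 𝕜}
    (hg : HasDerivAt g g' x) (hx : IsUnit (g x)) :
    HasDerivAt (fun s => Ring.inverse (g s))
      (-(Ring.inverse (g x) * g' * Ring.inverse (g x))) x := by
  obtain ⟨u, hu⟩ := hx
  have h : HasFDerivAt Ring.inverse
      (-ContinuousLinearMap.mulLeftRight 𝕜 R (Ring.inverse (g x)) (Ring.inverse (g x))) (g x) := by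
    rw [← hu, Ring.inverse_unit]
    exact hasFDerivAt_ringInverse u
  simpa [Function.comp_def] using h.comp_hasDerivAt x hg

section MatrixCalculus

variable {𝕜 l m n : Type*} [RCLike 𝕜] [Fintype l] [Fintype m] [Fintype n]

theorem Matrix.isBoundedBilinearMap_mul :
    IsBoundedBilinearMap 𝕜 (fun p : Matrix l m 𝕜 × Matrix m n 𝕜 => p.1 * p.2) where
  add_left := Matrix.add_mul
  smul_left := Matrix.smul_mul
  add_right := Matrix.mul_add
  smul_right c x y := Matrix.mul_smul x c y
  bound := ⟨1, one_pos, fun x y => by simpa using linfty_opNorm_mul x y⟩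

theorem HasDerivAt.matrix_mul {f : 𝕜 → Matrix l m 𝕜} {g : 𝕜 → Matrix m n 𝕜}
    {f' : Matrix l m 𝕜} {g' : Matrix m n 𝕜} {x : 𝕜}
    (hf : HasDerivAt f f' x) (hg : HasDerivAt g g' x) :
    HasDerivAt (fun s => f s * g s) (f' * g x + f x * g') x := by
  have h :=
    (Matrix.isBoundedBilinearMap_mul.hasFDerivAt (f x, g x)).comp_hasDerivAt x (hf.prodMk hg)
  simp only [IsBoundedBilinearMap.deriv_apply, Function.comp_def, add_comm] at h
  exact h

theorem HasDerivAt.matrix_apply {f : 𝕜 → Matrix m n 𝕜} {f' : Matrix m n 𝕜} {x : 𝕜}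
    (h : HasDerivAt f f' x) (i : m) (j : n) :
    HasDerivAt (fun s => f s i j) (f' i j) x :=
  (entryLinearMap 𝕜 𝕜 i j).toContinuousLinearMap.hasFDerivAt.comp_hasDerivAt x h

theorem HasDerivAt.matrix_inv [DecidableEq n] {g : 𝕜 → Matrix n n 𝕜}
    {g' : Matrix n n 𝕜} {x : 𝕜} (hg : HasDerivAt g g' x) (hx : IsUnit (g x)) :
    HasDerivAt (fun s => (g s)⁻¹) (-((g x)⁻¹ * g' * (g x)⁻¹)) x := by
  simp only [nonsing_inv_eq_ringInverse]
  exact hg.ringInverse hx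

end MatrixCalculus

section Riccati

variable {𝕜 m n : Type*} [RCLike 𝕜] [Fintype m] [Fintype n] [DecidableEq n]

theorem hasDerivAt_mul_inv_of_linear {P Φ : 𝕜 → Matrix m n 𝕜} {G : 𝕜 → Matrix n n 𝕜}
    {A : Matrix m m 𝕜} {B : Matrix n n 𝕜} {C : Matrix n m 𝕜} {x : 𝕜}
    (hP : HasDerivAt P (A * P x) x) (hG : HasDerivAt G (B * G x + C * P x) x)
    (hΦ : ∀ s, Φ s = P s * (G s)⁻¹) (hGx : IsUnit (G x)) :
    HasDerivAt Φ (A * Φ x - Φ x * B - Φ x * C * Φ x) x := by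
  have hGW : G x * (G x)⁻¹ = 1 := mul_nonsing_inv _ ((isUnit_iff_isUnit_det _).mp hGx)
  rw [show Φ = fun s => P s * (G s)⁻¹ from funext hΦ]
  convert hP.matrix_mul (hG.matrix_inv hGx) using 1
  simp only [Matrix.mul_add, Matrix.add_mul, Matrix.mul_neg, Matrix.mul_assoc, hGW,
    Matrix.mul_one]
  abel

theorem hasDerivAt_riccati_of_linear {F : 𝕜 → Matrix m m 𝕜} {E G : 𝕜 → Matrix n n 𝕜}
    {Φ : 𝕜 → Matrix m n 𝕜} {A : Matrix m m 𝕜} {B : Matrix n n 𝕜} {K : Matrix n m 𝕜}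
    {φ₀ : Matrix m n 𝕜} {x : 𝕜}
    (hF : HasDerivAt F (A * F x) x) (hE : HasDerivAt E (B * E x) x)
    (hG : ∀ s, G s = E s * (1 + K * φ₀) - K * F s * φ₀) (hΦ : ∀ s, Φ s = F s * φ₀ * (G s)⁻¹)
    (hGx : IsUnit (G x)) :
    HasDerivAt Φ (A * Φ x - Φ x * B - Φ x * (B * K - K * A) * Φ x) x := by
  have hP : HasDerivAt (fun s => F s * φ₀) (A * (F x * φ₀)) x := by
    simpa [Matrix.mul_assoc] using hF.matrix_mul (hasDerivAt_const x φ₀)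
  have hGd : HasDerivAt G (B * G x + (B * K - K * A) * (F x * φ₀)) x := by
    have h := (hE.matrix_mul (hasDerivAt_const x (1 + K * φ₀))).sub
      (((hasDerivAt_const x K).matrix_mul hF).matrix_mul (hasDerivAt_const x φ₀))
    rw [funext hG]
    refine h.congr_deriv ?_
    simp only [Matrix.mul_add, Matrix.mul_sub, Matrix.sub_mul, Matrix.mul_zero,
      Matrix.zero_mul, Matrix.mul_one, Matrix.mul_assoc, add_zero, zero_add]
    abel
  exact hasDerivAt_mul_inv_of_linear hP hGd hΦ hGx

end Riccati

theorem riccati_explicit_solution_general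
    {M N N₀ : ℕ}
    (R : Matrix (Fin N) (Fin N) ℝ) (L : Matrix (Fin M) (Fin M) ℝ)
    (K : Matrix (Fin N) (Fin M) ℝ) (φ₀ : Matrix (Fin M) (Fin N) ℝ)
    (xiR : (Fin N₀ → ℝ) → Matrix (Fin N) (Fin N) ℝ)
    (hxiR : ∀ t, xiR t = ∑ n : Fin N₀, t n • R ^ ((n : ℕ) + 1))
    (xiL : (Fin N₀ → ℝ) → Matrix (Fin M) (Fin M) ℝ)
    (hxiL : ∀ t, xiL t = ∑ n : Fin N₀, t n • L ^ ((n : ℕ) + 1))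
    (G : (Fin N₀ → ℝ) → Matrix (Fin N) (Fin N) ℝ)
    (hG : ∀ t, G t = NormedSpace.exp (xiR t) * (1 + K * φ₀)
      - K * NormedSpace.exp (xiL t) * φ₀)
    (Φ : (Fin N₀ → ℝ) → Matrix (Fin M) (Fin N) ℝ)
    (hΦ : ∀ t, Φ t = NormedSpace.exp (xiL t) * φ₀ * (G t)⁻¹)
    (t : Fin N₀ → ℝ) (ht : IsUnit (G t)) (n : Fin N₀) :
    ∀ (i : Fin M) (j : Fin N),
      HasDerivAt (fun s => Φ (Function.update t n s) i j)
        ((L ^ ((n : ℕ) + 1) * Φ t - Φ t * R ^ ((n : ℕ) + 1)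
          - Φ t * (R ^ ((n : ℕ) + 1) * K - K * L ^ ((n : ℕ) + 1)) * Φ t) i j)
        (t n) := by
  intro i j
  have hF := hasDerivAt_exp_sum_update (fun m : Fin N₀ => L ^ ((m : ℕ) + 1)) t n
    (fun _ => Commute.pow_pow_self L _ _) (t n)
  have hE := hasDerivAt_exp_sum_update (fun m : Fin N₀ => R ^ ((m : ℕ) + 1)) t n
    (fun _ => Commute.pow_pow_self R _ _) (t n)
  simp only [← hxiL] at hF
  simp only [← hxiR] at hE
  have hΦd := hasDerivAt_riccati_of_linear (Φ := fun s => Φ (Function.update t n s))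
    (G := fun s => G (Function.update t n s)) hF hE (fun s => hG (Function.update t n s))
    (fun s => hΦ (Function.update t n s)) (by rwa [Function.update_eq_self])
  simp only [Function.update_eq_self] at hΦd
  exact hΦd.matrix_apply i j

/-- The explicit formula
`φ(t) = e^{ξ(L)} φ₀ (e^{ξ(R)}(1 + K φ₀) - K e^{ξ(L)} φ₀)⁻¹`,
with `ξ(A) = ∑_{n=1}^{N₀} t_n A^n`, solves the matrix Riccati equations
`∂_{t_n} φ = L^n φ - φ R^n - φ (R^n K - K L^n) φ` wherever the inverse exists. -/
theorem riccati_explicit_solution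
    {M N N₀ : ℕ}
    (R : Matrix (Fin N) (Fin N) ℝ) (L : Matrix (Fin M) (Fin M) ℝ)
    (K : Matrix (Fin N) (Fin M) ℝ) (φ₀ : Matrix (Fin M) (Fin N) ℝ)
    (Q : Matrix (Fin N) (Fin M) ℝ) (hQ : Q = R * K - K * L)
    (xiR : (Fin N₀ → ℝ) → Matrix (Fin N) (Fin N) ℝ)
    (hxiR : ∀ t, xiR t = ∑ n : Fin N₀, t n • R ^ ((n : ℕ) + 1))
    (xiL : (Fin N₀ → ℝ) → Matrix (Fin M) (Fin M) ℝ)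
    (hxiL : ∀ t, xiL t = ∑ n : Fin N₀, t n • L ^ ((n : ℕ) + 1))
    (G : (Fin N₀ → ℝ) → Matrix (Fin N) (Fin N) ℝ)
    (hG : ∀ t, G t = NormedSpace.exp (xiR t) * (1 + K * φ₀)
      - K * NormedSpace.exp (xiL t) * φ₀)
    (Φ : (Fin N₀ → ℝ) → Matrix (Fin M) (Fin N) ℝ)
    (hΦ : ∀ t, Φ t = NormedSpace.exp (xiL t) * φ₀ * (G t)⁻¹)
    (t : Fin N₀ → ℝ) (ht : IsUnit (G t)) (n : Fin N₀) :
    ∀ (i : Fin M) (j : Fin N),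
      HasDerivAt (fun s => Φ (Function.update t n s) i j)
        ((L ^ ((n : ℕ) + 1) * Φ t - Φ t * R ^ ((n : ℕ) + 1)
          - Φ t * (R ^ ((n : ℕ) + 1) * K - K * L ^ ((n : ℕ) + 1)) * Φ t) i j)
        (t n) :=
  riccati_explicit_solution_general R L K φ₀ xiR hxiR xiL hxiL G hG Φ hΦ t ht n
end
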